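/- For every integer n ≥ 2 and complex x avoiding poles, ∑_{k=0}^{n} k^2 · C(2n-k, n) · C(x+k, k) = [(x+1)(xn+3n+1)/(n-1)] · C(x+2n+1, n-2). -/

import Mathlib

open Finset

noncomputable def gch (y : ℝ) (s : ℕ) : ℝ := (∏ i ∈ Finset.range s, (y - (i:ℝ))) / (Nat.factorial s)

/-!
`gch` is `Ring.choose` on `ℝ`, so the identity can be proved in any commutative binomial ring,
multiplied through by `n - 1`. For `k ≥ 2`,
`k² C(x+k, k) = (x+1)(x+2) C(x+k, k-2) + (x+1) C(x+k, k-1)`, which splits the sum into two sums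
`∑ C(a+m-j, a) C(z+j, j)`. Each of these equals `C(z+a+m+1, m)` by upper negation and the
Chu–Vandermonde identity, and `(n-1) C(y, n-1) = (y-n+2) C(y, n-2)` collects the two results.
-/

theorem gch_eq_choose (y : ℝ) (s : ℕ) : gch y s = Ring.choose y s := by
  rw [gch, Ring.choose_eq_smul, ← Polynomial.aeval_eq_smeval, Polynomial.aeval_def,
    ← Polynomial.eval_map, descPochhammer_map, descPochhammer_eval_eq_prod_range, smul_eq_mul,
    div_eq_inv_mul]

namespace Ring

variable {R : Type*} [CommRing R] [BinomialRing R]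

theorem natCast_add_one_mul_choose_succ (r : R) (k : ℕ) :
    ((k : R) + 1) * choose r (k + 1) = choose r k * (r - k) := by
  have h := choose_smul_choose r (Nat.le_add_right k 1)
  rwa [Nat.choose_succ_self_right, Nat.add_sub_cancel_left, choose_one_right, nsmul_eq_mul,
    Nat.cast_succ] at h

theorem choose_add_self_eq_negOnePow_smul (x : R) (k : ℕ) :
    choose (x + k) k = Int.negOnePow k • choose (-(x + 1)) k := by
  rw [choose_neg, smul_smul, ← Int.negOnePow_add, Int.negOnePow_even _ (by simp [← two_mul]),
    one_smul]
  ring_nf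

theorem sum_antidiagonal_choose_add_mul_choose_add (x y : R) (m : ℕ) :
    ∑ ij ∈ antidiagonal m, choose (x + ij.1) ij.1 * choose (y + ij.2) ij.2
      = choose (x + y + m + 1) m := by
  calc ∑ ij ∈ antidiagonal m, choose (x + ij.1) ij.1 * choose (y + ij.2) ij.2
      = Int.negOnePow m •
          ∑ ij ∈ antidiagonal m, choose (-(x + 1)) ij.1 * choose (-(y + 1)) ij.2 := by
        rw [smul_sum]
        refine sum_congr rfl fun ij hij => ?_
        rw [choose_add_self_eq_negOnePow_smul x, choose_add_self_eq_negOnePow_smul y,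
          smul_mul_smul_comm, ← Int.negOnePow_add, ← Nat.cast_add, mem_antidiagonal.mp hij]
    _ = choose (x + y + 1 + m) m := by
        rw [← add_choose_eq m (Commute.all _ _), choose_add_self_eq_negOnePow_smul]
        ring_nf
    _ = choose (x + y + m + 1) m := by ring_nf

theorem sum_range_choose_mul_choose_add (x : R) (a m : ℕ) :
    ∑ k ∈ range (m + 1), ((a + (m - k)).choose a : R) * choose (x + k) k
      = choose (x + a + m + 1) m := by
  rw [← sum_antidiagonal_choose_add_mul_choose_add x (a : R) m,
    Nat.sum_antidiagonal_eq_sum_range_succ fun i j => choose (x + i) i * choose ((a : R) + j) j]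
  refine sum_congr rfl fun k _ => ?_
  rw [mul_comm, ← Nat.cast_add, choose_natCast, Nat.choose_symm_add]

theorem natCast_add_two_sq_mul_choose (x : R) (i : ℕ) :
    ((i : R) + 2) ^ 2 * choose (x + i + 2) (i + 2)
      = (x + 1) * (x + 2) * choose (x + i + 2) i + (x + 1) * choose (x + i + 2) (i + 1) := by
  have h₁ := natCast_add_one_mul_choose_succ (x + i + 2) i
  have h₂ := natCast_add_one_mul_choose_succ (x + i + 2) (i + 1)
  push_cast at h₂
  linear_combination ((i : R) + 2) * h₂ + (x + 1) * h₁

theorem sub_one_mul_sum_sq_mul_choose (x : R) {n : ℕ} (hn : 2 ≤ n) :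
    ((n : R) - 1) *
        ∑ k ∈ range (n + 1), (k : R) ^ 2 * ((2 * n - k).choose n : R) * choose (x + k) k
      = (x + 1) * (x * n + 3 * n + 1) * choose (x + 2 * n + 1) (n - 2) := by
  obtain ⟨p, rfl⟩ : ∃ p, n = p + 2 := ⟨n - 2, by omega⟩
  have hsum₂ :
      ∑ i ∈ range (p + 1), ((p + 2 + (p - i)).choose (p + 2) : R) * choose (x + 2 + i) i
      = choose (x + 2 * (p + 2 : ℕ) + 1) p := by
    rw [sum_range_choose_mul_choose_add]; push_cast; ring_nf
  have hsum₁ :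
      ∑ j ∈ range (p + 2), ((p + 2 + (p + 1 - j)).choose (p + 2) : R) * choose (x + 1 + j) j
      = choose (x + 2 * (p + 2 : ℕ) + 1) (p + 1) := by
    rw [sum_range_choose_mul_choose_add]; push_cast; ring_nf
  have hratio := natCast_add_one_mul_choose_succ (x + 2 * (p + 2 : ℕ) + 1) p
  have hsplit : ∀ i ∈ range (p + 1),
      ((i + 1 + 1 : ℕ) : R) ^ 2 * ((2 * (p + 2) - (i + 1 + 1)).choose (p + 2) : R)
          * choose (x + (i + 1 + 1 : ℕ)) (i + 1 + 1)
        = (x + 1) * (x + 2) * (((p + 2 + (p - i)).choose (p + 2) : R) * choose (x + 2 + i) i)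
          + (x + 1) * (((p + 2 + (p + 1 - (i + 1))).choose (p + 2) : R)
            * choose (x + 1 + (i + 1 : ℕ)) (i + 1)) := by
    intro i hi
    have hi : i ≤ p := Nat.lt_succ_iff.mp (mem_range.mp hi)
    rw [show 2 * (p + 2) - (i + 1 + 1) = p + 2 + (p - i) by omega,
      show p + 1 - (i + 1) = p - i by omega]
    generalize (p + 2 + (p - i)).choose (p + 2) = c
    rw [show x + ((i + 1 + 1 : ℕ) : R) = x + i + 2 by push_cast; ring,
      show x + 2 + (i : R) = x + i + 2 by ring,
      show x + 1 + ((i + 1 : ℕ) : R) = x + i + 2 by push_cast; ring]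
    push_cast
    linear_combination (c : R) * natCast_add_two_sq_mul_choose x i
  -- the `j = 0` term of `hsum₁` is the `k = 1` term of the sum, which `hsplit` does not cover
  rw [sum_range_succ'] at hsum₁
  rw [sum_range_succ', sum_range_succ', sum_congr rfl hsplit, sum_add_distrib, ← mul_sum,
    ← mul_sum, hsum₂, eq_sub_of_add_eq hsum₁, Nat.add_sub_cancel,
    show 2 * (p + 2) - (0 + 1) = p + 2 + (p + 1 - 0) by omega]
  simp only [Nat.cast_zero, Nat.cast_one, zero_add, add_zero, choose_zero_right, choose_one_right]
  push_cast at hratio ⊢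
  linear_combination (x + 1) * hratio

end Ring

theorem stmt16 (n : ℕ) (hn : 2 ≤ n) (x : ℝ) :
    ∑ k ∈ Finset.range (n+1), (k:ℝ)^2 * (((2*n-k).choose n : ℕ) : ℝ) * gch (x+(k:ℝ)) k
      = ((x+1)*(x*(n:ℝ)+3*(n:ℝ)+1)/((n:ℝ)-1)) * gch (x+2*(n:ℝ)+1) (n-2) := by
  have hn₁ : (n : ℝ) - 1 ≠ 0 := by
    have : (2 : ℝ) ≤ n := by exact_mod_cast hn
    linarith
  simp only [gch_eq_choose]
  rw [div_mul_eq_mul_div, eq_div_iff hn₁, mul_comm]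
  exact Ring.sub_one_mul_sum_sq_mul_choose x hn
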